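/- Let X be a proper geodesic metric space, let D > 0, and let Y₁, …, Yₙ be nonempty closed D-contracting subsets of X that are pairwise D-separated, i.e. diam(Π_{Y_i}(Y_j)) ≤ D whenever i ≠ j. Let x₀, x_{n+1} ∈ X. Let x₁ be a projection of x₀ onto Y₁, and for each k ∈ {2,…,n} let x_k be a projection onto Y_k of some point of Y_{k−1}. Assume that for every j ∈ {1,…,n}, every geodesic from x_{j−1} to x_{n+1} intersects Y_j. Then Σ_{k=0}^{n} d(x_k, x_{k+1}) ≤ d(x₀, x_{n+1}) + 6nD. -/
import Mathlib


/-- `c : [a,b] → X` is a geodesic. -/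
def IsGeodesic {X : Type*} [MetricSpace X] (c : ℝ → X) (a b : ℝ) : Prop :=
  a ≤ b ∧ ∀ s ∈ Set.Icc a b, ∀ t ∈ Set.Icc a b, dist (c s) (c t) = |s - t|

/-- Every two points are joined by a geodesic. -/
def GeodesicSpace (X : Type*) [MetricSpace X] : Prop :=
  ∀ x y : X, ∃ (a b : ℝ) (c : ℝ → X), IsGeodesic c a b ∧ c a = x ∧ c b = y

/-- The set of projections of the point `x` onto `Y`. -/
def projSet {X : Type*} [MetricSpace X] (Y : Set X) (x : X) : Set X :=
  {p | p ∈ Y ∧ dist x p = Metric.infDist x Y}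

/-- `Π_Y(Z)`: the set of projections onto `Y` of points of `Z`. -/
def projOn {X : Type*} [MetricSpace X] (Y Z : Set X) : Set X :=
  ⋃ z ∈ Z, projSet Y z

/-- The `A`-neighborhood `Y^{+A}` of `Y`. -/
def nbhd {X : Type*} [MetricSpace X] (Y : Set X) (A : ℝ) : Set X :=
  {x | Metric.infDist x Y ≤ A}

/-- `Y` is `D`-contracting: the projection onto `Y` of any geodesic staying at
distance at least `D` from `Y` has diameter at most `D`. -/
def IsContracting {X : Type*} [MetricSpace X] (D : ℝ) (Y : Set X) : Prop :=
  ∀ (c : ℝ → X) (a b : ℝ), IsGeodesic c a b →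
    (∀ t ∈ Set.Icc a b, D ≤ Metric.infDist (c t) Y) →
    EMetric.diam (projOn Y (c '' Set.Icc a b)) ≤ ENNReal.ofReal D

lemma projSet_nonempty' {X : Type*} [MetricSpace X] [ProperSpace X] {Y : Set X}
    (hcl : IsClosed Y) (hne : Y.Nonempty) (x : X) : (projSet Y x).Nonempty := by
  obtain ⟨y, hy, h⟩ := hcl.exists_infDist_eq_dist hne x
  exact ⟨y, hy, h.symm⟩

lemma mem_projOn' {X : Type*} [MetricSpace X] {Y Z : Set X} {z p : X}
    (hz : z ∈ Z) (hp : p ∈ projSet Y z) : p ∈ projOn Y Z :=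
  Set.mem_biUnion hz hp

lemma dist_le_of_diam {X : Type*} [MetricSpace X] {S : Set X} {D : ℝ} (hD : 0 ≤ D)
    (h : EMetric.diam S ≤ ENNReal.ofReal D) {p q : X} (hp : p ∈ S) (hq : q ∈ S) :
    dist p q ≤ D := by
  have := (EMetric.edist_le_diam_of_mem hp hq).trans h
  rw [edist_dist] at this
  exact (ENNReal.ofReal_le_ofReal_iff hD).1 this

/-- Key lemma: projections onto contracting sets are almost gates. -/
lemma key_lemma {X : Type*} [MetricSpace X] [ProperSpace X] (hX : GeodesicSpace X)
    {D : ℝ} (hD : 0 < D) {Y : Set X} (hcl : IsClosed Y) (hne : Y.Nonempty)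
    (hc : IsContracting D Y) {x p q : X} (hp : p ∈ projSet Y x) (hq : q ∈ Y) :
    dist x p + dist p q ≤ dist x q + 3 * D := by
  obtain ⟨hpY, hpd⟩ := hp
  by_cases h1 : Metric.infDist x Y ≤ D
  · have hxp : dist x p ≤ D := hpd ▸ h1
    have := dist_triangle p x q
    have := dist_comm p x
    have := dist_nonneg (x := x) (y := q)
    linarith
  · push_neg at h1
    obtain ⟨a, b, c, ⟨hab, hgeo⟩, hca, hcb⟩ := hX x q
    set f : ℝ → ℝ := fun t => Metric.infDist (c t) Y with hf
    have hfa : D < f a := by simpa [hf, hca] using h1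
    have hfb : f b ≤ D := by
      simp only [hf, hcb, Metric.infDist_zero_of_mem hq]
      exact hD.le
    have hlip : ∀ s ∈ Set.Icc a b, ∀ t ∈ Set.Icc a b, f s ≤ f t + |s - t| := by
      intro s hs t ht
      calc f s ≤ f t + dist (c s) (c t) := Metric.infDist_le_infDist_add_dist
        _ = f t + |s - t| := by rw [hgeo s hs t ht]
    set S := {t | t ∈ Set.Icc a b ∧ f t ≤ D} with hS
    have hbS : b ∈ S := ⟨Set.right_mem_Icc.2 hab, hfb⟩
    have hSne : S.Nonempty := ⟨b, hbS⟩
    have hbdd : BddBelow S := ⟨a, fun t ht => ht.1.1⟩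
    set t₀ := sInf S with ht₀
    have ht₀ab : t₀ ∈ Set.Icc a b :=
      ⟨le_csInf hSne (fun t ht => ht.1.1), csInf_le hbdd hbS⟩
    have hlt : ∀ t ∈ Set.Icc a b, t < t₀ → D < f t := by
      intro t ht htlt
      by_contra h
      push_neg at h
      exact absurd (csInf_le hbdd ⟨ht, h⟩) (not_le.2 htlt)
    have hft₀le : f t₀ ≤ D := by
      by_contra h
      push_neg at h
      have hmem : ∀ t ∈ S, t₀ + (f t₀ - D) ≤ t := by
        intro t ht
        have h2 := hlip t₀ ht₀ab t ht.1
        have h3 : t₀ ≤ t := csInf_le hbdd ht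
        have h4 : |t₀ - t| = t - t₀ := by rw [abs_sub_comm]; exact abs_of_nonneg (by linarith)
        have := ht.2
        linarith [h2, h4.symm ▸ h2]
      have := le_csInf hSne hmem
      linarith
    have hft₀ge : D ≤ f t₀ := by
      rcases eq_or_lt_of_le ht₀ab.1 with h | h
      · exact (h ▸ hfa).le
      · refine le_of_forall_pos_le_add ?_
        intro ε hε
        set t := max a (t₀ - ε) with htdef
        have ht1 : t < t₀ := max_lt h (by linarith)
        have ht2 : t ∈ Set.Icc a b := ⟨le_max_left _ _, ht1.le.trans ht₀ab.2⟩
        have h5 := hlt t ht2 ht1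
        have h6 := hlip t ht2 t₀ ht₀ab
        have h7 : |t - t₀| ≤ ε := by
          have : t₀ - ε ≤ t := le_max_right _ _
          rw [abs_of_nonpos (by linarith)]
          linarith
        linarith
    have hsub : Set.Icc a t₀ ⊆ Set.Icc a b :=
      Set.Icc_subset_Icc le_rfl ht₀ab.2
    have hgeo' : IsGeodesic c a t₀ :=
      ⟨ht₀ab.1, fun s hs t ht => hgeo s (hsub hs) t (hsub ht)⟩
    have hdistlow : ∀ t ∈ Set.Icc a t₀, D ≤ f t := by
      intro t ht
      rcases lt_or_eq_of_le ht.2 with h | h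
      · exact (hlt t ⟨ht.1, ht.2.trans ht₀ab.2⟩ h).le
      · rw [h]; exact hft₀ge
    have hdiam := hc c a t₀ hgeo' hdistlow
    obtain ⟨m, hmY, hmd⟩ := projSet_nonempty' hcl hne (c t₀)
    have hpmem : p ∈ projOn Y (c '' Set.Icc a t₀) :=
      mem_projOn' ⟨a, Set.left_mem_Icc.2 ht₀ab.1, rfl⟩ (by rw [hca]; exact ⟨hpY, hpd⟩)
    have hmmem : m ∈ projOn Y (c '' Set.Icc a t₀) :=
      mem_projOn' ⟨t₀, Set.right_mem_Icc.2 ht₀ab.1, rfl⟩ ⟨hmY, hmd⟩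
    have hpm : dist p m ≤ D := dist_le_of_diam hD.le hdiam hpmem hmmem
    have hctm : dist (c t₀) m ≤ D := by rw [hmd]; exact hft₀le
    have hxct : dist x (c t₀) = t₀ - a := by
      rw [← hca, hgeo a (Set.left_mem_Icc.2 hab) t₀ ht₀ab, abs_of_nonpos (by linarith [ht₀ab.1])]
      ring
    have hctq : dist (c t₀) q = b - t₀ := by
      rw [← hcb, hgeo t₀ ht₀ab b (Set.right_mem_Icc.2 hab), abs_of_nonpos (by linarith [ht₀ab.2])]
      ring
    have hxq : dist x q = b - a := by
      rw [← hca, ← hcb, hgeo a (Set.left_mem_Icc.2 hab) b (Set.right_mem_Icc.2 hab),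
        abs_of_nonpos (by linarith)]
      ring
    have hxp : dist x p ≤ (t₀ - a) + D :=
      calc dist x p = Metric.infDist x Y := hpd
        _ ≤ dist x m := Metric.infDist_le_dist_of_mem hmY
        _ ≤ dist x (c t₀) + dist (c t₀) m := dist_triangle _ _ _
        _ ≤ (t₀ - a) + D := by rw [hxct]; linarith
    have hpq : dist p q ≤ D + D + (b - t₀) :=
      calc dist p q ≤ dist p m + dist m (c t₀) + dist (c t₀) q := dist_triangle4 _ _ _ _
        _ ≤ D + D + (b - t₀) := by
            rw [dist_comm m (c t₀), hctq]; linarith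
    linarith

theorem stmt16 {X : Type*} [MetricSpace X] [ProperSpace X] (hX : GeodesicSpace X)
    (D : ℝ) (hD : 0 < D) (n : ℕ) (hn : 1 ≤ n) (Y : ℕ → Set X)
    (hne : ∀ i ∈ Finset.Icc 1 n, (Y i).Nonempty)
    (hcl : ∀ i ∈ Finset.Icc 1 n, IsClosed (Y i))
    (hcontr : ∀ i ∈ Finset.Icc 1 n, IsContracting D (Y i))
    (hsep : ∀ i ∈ Finset.Icc 1 n, ∀ j ∈ Finset.Icc 1 n, i ≠ j →
      EMetric.diam (projOn (Y i) (Y j)) ≤ ENNReal.ofReal D)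
    (x : ℕ → X)
    (hx1 : x 1 ∈ projSet (Y 1) (x 0))
    (hxk : ∀ k ∈ Finset.Icc 2 n, ∃ z ∈ Y (k - 1), x k ∈ projSet (Y k) z)
    (hcross : ∀ j ∈ Finset.Icc 1 n, ∀ (c : ℝ → X) (a b : ℝ), IsGeodesic c a b →
      c a = x (j - 1) → c b = x (n + 1) → ∃ t ∈ Set.Icc a b, c t ∈ Y j) :
    ∑ k ∈ Finset.range (n + 1), dist (x k) (x (k + 1)) ≤
      dist (x 0) (x (n + 1)) + 6 * n * D := by
  have hmemY : ∀ k ∈ Finset.Icc 1 n, x k ∈ Y k := by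
    intro k hk
    rcases Finset.mem_Icc.1 hk with ⟨hk1, hk2⟩
    rcases eq_or_lt_of_le hk1 with h | h
    · rw [← h]; exact hx1.1
    · obtain ⟨z, hz, hxz⟩ := hxk k (Finset.mem_Icc.2 ⟨h, hk2⟩)
      exact hxz.1
  have step : ∀ j ∈ Finset.Icc 1 n,
      dist (x (j - 1)) (x j) + dist (x j) (x (n + 1)) ≤
        dist (x (j - 1)) (x (n + 1)) + 6 * D := by
    intro j hj
    rcases Finset.mem_Icc.1 hj with ⟨hj1, hj2⟩
    obtain ⟨a, b, c, hgeo, hca, hcb⟩ := hX (x (j - 1)) (x (n + 1))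
    obtain ⟨t, ht, hqY⟩ := hcross j hj c a b hgeo hca hcb
    set q := c t with hqdef
    have hsplit : dist (x (j - 1)) q + dist q (x (n + 1)) = dist (x (j - 1)) (x (n + 1)) := by
      obtain ⟨hab, hg⟩ := hgeo
      rw [← hca, ← hcb, hg a (Set.left_mem_Icc.2 hab) t ht,
        hg t ht b (Set.right_mem_Icc.2 hab),
        hg a (Set.left_mem_Icc.2 hab) b (Set.right_mem_Icc.2 hab),
        abs_of_nonpos (by linarith [ht.1]), abs_of_nonpos (by linarith [ht.2]),
        abs_of_nonpos (by linarith)]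
      ring
    rcases eq_or_lt_of_le hj1 with h | h
    · -- j = 1
      have hkey := key_lemma hX hD (hcl j hj) (hne j hj) (hcontr j hj)
        (x := x (j - 1)) (p := x j) (q := q) ?_ hqY
      · have h2 : dist (x j) (x (n + 1)) ≤ dist (x j) q + dist q (x (n + 1)) :=
          dist_triangle _ _ _
        linarith
      · have := hx1
        rw [← h]
        simpa using hx1
    · -- j ≥ 2
      obtain ⟨z, hz, hxj⟩ := hxk j (Finset.mem_Icc.2 ⟨h, hj2⟩)
      have hj1' : j - 1 ∈ Finset.Icc 1 n := Finset.mem_Icc.2 ⟨by omega, by omega⟩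
      obtain ⟨p, hpmem⟩ := projSet_nonempty' (hcl j hj) (hne j hj) (x (j - 1))
      have hkey := key_lemma hX hD (hcl j hj) (hne j hj) (hcontr j hj) hpmem hqY
      have hdiamsep := hsep j hj (j - 1) hj1' (by omega)
      have hxjp : dist (x j) p ≤ D :=
        dist_le_of_diam hD.le hdiamsep (mem_projOn' hz hxj)
          (mem_projOn' (hmemY (j - 1) hj1') hpmem)
      have t1 : dist (x (j - 1)) (x j) ≤ dist (x (j - 1)) p + dist p (x j) :=
        dist_triangle _ _ _
      have t2 : dist (x j) (x (n + 1)) ≤ dist (x j) p + dist p q + dist q (x (n + 1)) :=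
        dist_triangle4 _ _ _ _
      have t3 : dist p (x j) = dist (x j) p := dist_comm _ _
      linarith
  have main : ∀ m, m ≤ n →
      ∑ k ∈ Finset.range m, dist (x k) (x (k + 1)) + dist (x m) (x (n + 1)) ≤
        dist (x 0) (x (n + 1)) + 6 * m * D := by
    intro m
    induction m with
    | zero => simp
    | succ m ih =>
      intro hm
      have h1 := ih (by omega)
      have h2 := step (m + 1) (Finset.mem_Icc.2 ⟨by omega, hm⟩)
      rw [Nat.add_sub_cancel] at h2
      rw [Finset.sum_range_succ]
      push_cast
      linarith
  have := main n le_rfl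
  rw [Finset.sum_range_succ]
  exact this
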